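/- For even k ≥ 4, let ℓ_k(x) = |(x_1 + ... + x_k)/√k| on {-1,1}^k. Then the Fourier weight of ℓ_k at levels 4 and above satisfies W^{≥4}[ℓ_k] ≥ 2^{−2k}/k; in particular W^{≥4}[ℓ_k] ≠ 0. -/

import Mathlib

open Finset

/-- The Fourier coefficient `f̂(S)` of `f : {-1,1}ᵏ → ℝ`. -/
noncomputable def fourierCoef (k : ℕ) (f : (Fin k → Bool) → ℝ) (S : Finset (Fin k)) : ℝ :=
  (∑ x : Fin k → Bool, f x * ∏ i ∈ S, (if x i then (1 : ℝ) else -1)) / 2 ^ k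

noncomputable def eps (b : Bool) : ℝ := if b then 1 else -1

@[simp] lemma eps_true : eps true = 1 := by simp [eps]
@[simp] lemma eps_false : eps false = -1 := by simp [eps]

lemma cons_split (n : ℕ) (G : (Fin (n+1) → Bool) → ℝ) :
    ∑ z : Fin (n+1) → Bool, G z
      = ∑ b : Bool, ∑ z : Fin n → Bool, G (Fin.cons b z) := by
  have := Fintype.sum_equiv (Fin.consEquiv (fun _ : Fin (n+1) => Bool))
    (fun p => G (Fin.cons p.1 p.2)) G (fun p => rfl)
  rw [← this, Fintype.sum_prod_type]

lemma eps_cons (b : Bool) (m : ℕ) (z : Fin m → Bool) :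
    ∑ i, eps ((Fin.cons b z : Fin (m+1) → Bool) i) = eps b + ∑ i, eps (z i) := by
  rw [Fin.sum_univ_succ]
  simp [Fin.cons_zero, Fin.cons_succ]

lemma sum_eps (m : ℕ) (F : ℝ → ℝ) :
    ∑ z : Fin m → Bool, F (∑ i, eps (z i))
      = ∑ j ∈ Finset.range (m+1), (m.choose j : ℝ) * F (2*j - m) := by
  induction m generalizing F with
  | zero => simp
  | succ m ih =>
      rw [cons_split m (fun z => F (∑ i, eps (z i)))]
      simp only [eps_cons, Fintype.sum_bool, eps_true, eps_false]
      have h1 : ∑ z : Fin m → Bool, F (1 + ∑ i, eps (z i))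
          = ∑ j ∈ Finset.range (m+1), (m.choose j : ℝ) * F (2*j - m + 1) := by
        rw [ih (fun s => F (1 + s))]
        refine Finset.sum_congr rfl fun j _ => ?_
        have : (1:ℝ) + (2*j - m) = 2*j - m + 1 := by ring
        rw [this]
      have h2 : ∑ z : Fin m → Bool, F (-1 + ∑ i, eps (z i))
          = ∑ j ∈ Finset.range (m+1), (m.choose j : ℝ) * F (2*j - m - 1) := by
        rw [ih (fun s => F (-1 + s))]
        refine Finset.sum_congr rfl fun j _ => ?_
        have : (-1:ℝ) + (2*j - m) = 2*j - m - 1 := by ring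
        rw [this]
      have key : ∀ j ∈ Finset.range (m+1),
          (((m+1).choose (j+1) : ℝ)) * F (2*(j+1:ℕ) - ((m+1:ℕ):ℝ))
            = (m.choose j : ℝ) * F (2*j - m + 1) + (m.choose (j+1) : ℝ) * F (2*((j+1:ℕ):ℝ) - m - 1) := by
        intro j _
        rw [Nat.choose_succ_succ]
        push_cast
        have e1 : (2*((j:ℝ)+1) - (m+1)) = 2*j - m + 1 := by ring
        have e2 : 2*((j:ℝ)+1) - m - 1 = 2*j - m + 1 := by ring
        rw [e1, add_mul, e2]
      have h3 : (∑ j ∈ Finset.range (m+1), (m.choose (j+1) : ℝ) * F (2*((j+1:ℕ):ℝ) - m - 1))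
            + (((m+1).choose 0 : ℝ)) * F (2*((0:ℕ):ℝ) - ((m+1:ℕ):ℝ))
          = ∑ j ∈ Finset.range (m+1), (m.choose j : ℝ) * F (2*j - m - 1) := by
        have h0 : (((m+1).choose 0 : ℝ)) * F (2*((0:ℕ):ℝ) - ((m+1:ℕ):ℝ))
            = (m.choose 0 : ℝ) * F (2*((0:ℕ):ℝ) - m - 1) := by
          norm_num
          congr 1
          push_cast; ring
        rw [h0, ← Finset.sum_range_succ' (fun j => (m.choose j : ℝ) * F (2*(j:ℝ) - m - 1)) (m+1)]
        rw [Finset.sum_range_succ]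
        simp [Nat.choose_succ_self]
      have hR : ∑ j ∈ Finset.range (m+1+1), ((m+1).choose j : ℝ) * F (2*j - ((m+1:ℕ):ℝ))
          = (∑ j ∈ Finset.range (m+1), (m.choose j:ℝ) * F (2*j - m + 1))
            + ∑ j ∈ Finset.range (m+1), (m.choose j:ℝ) * F (2*j - m - 1) := by
        rw [Finset.sum_range_succ' _ (m+1), Finset.sum_congr rfl key, Finset.sum_add_distrib,
          add_assoc, h3]
      rw [h1, h2, hR]

lemma sum4 (t : ℝ) :
    ∑ y : Fin 4 → Bool, (∏ i, eps (y i)) * |(∑ i, eps (y i)) + t|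
      = |t+4| - 4*|t+2| + 6*|t| - 4*|t-2| + |t-4| := by
  have hp : ∀ (n : ℕ) (b : Bool) (z : Fin n → Bool),
      ∏ i, eps ((Fin.cons b z : Fin (n+1) → Bool) i) = eps b * ∏ i, eps (z i) := by
    intro n b z
    rw [Fin.prod_univ_succ]
    simp [Fin.cons_zero, Fin.cons_succ]
  rw [cons_split 3]
  simp only [cons_split, Fintype.sum_bool, hp, eps_cons, eps_true, eps_false]
  norm_num
  ring_nf

noncomputable def gfun (t : ℝ) : ℝ := |t+4| - 4*|t+2| + 6*|t| - 4*|t-2| + |t-4|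

lemma gfun_of_ge (t : ℝ) (h : 4 ≤ t) : gfun t = 0 := by
  unfold gfun
  rw [abs_of_nonneg (by linarith), abs_of_nonneg (by linarith), abs_of_nonneg (by linarith),
    abs_of_nonneg (by linarith), abs_of_nonneg (by linarith)]
  ring

lemma gfun_of_le (t : ℝ) (h : t ≤ -4) : gfun t = 0 := by
  unfold gfun
  rw [abs_of_nonpos (by linarith), abs_of_nonpos (by linarith), abs_of_nonpos (by linarith),
    abs_of_nonpos (by linarith), abs_of_nonpos (by linarith)]
  ring

lemma gfun_zero : gfun 0 = -8 := by unfold gfun; norm_num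
lemma gfun_two : gfun 2 = 4 := by
  unfold gfun
  rw [show |(2:ℝ)+4| = 6 by norm_num, show |(2:ℝ)+2| = 4 by norm_num,
    show |(2:ℝ)| = 2 by norm_num, show |(2:ℝ)-2| = 0 by norm_num,
    show |(2:ℝ)-4| = 2 by norm_num]
  norm_num
lemma gfun_neg_two : gfun (-2) = 4 := by
  unfold gfun
  rw [show |(-2:ℝ)+4| = 2 by norm_num, show |(-2:ℝ)+2| = 0 by norm_num,
    show |(-2:ℝ)| = 2 by norm_num, show |(-2:ℝ)-2| = 4 by norm_num,
    show |(-2:ℝ)-4| = 6 by norm_num]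
  norm_num

lemma choose_lt (n : ℕ) (hn : 1 ≤ n) : (n+n).choose (n+1) < (n+n).choose n := by
  have h1 : (n+n).choose (n+1) * (n+1) = (n+n).choose n * (n+n-n) := Nat.choose_succ_right_eq _ _
  have h2 : n+n-n = n := by omega
  rw [h2] at h1
  have hpos : 0 < (n+n).choose n := Nat.choose_pos (by omega)
  nlinarith

lemma U_le (n : ℕ) : ∑ z : Fin (n+n) → Bool, gfun (∑ i, eps (z i)) ≤ -8 := by
  rw [sum_eps]
  rcases Nat.eq_zero_or_pos n with h0 | hn
  · subst h0; simp [gfun_zero]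
  · have hsub : ({n-1, n, n+1} : Finset ℕ) ⊆ Finset.range (n+n+1) := by
      intro j hj; simp at hj; simp; omega
    rw [← Finset.sum_subset hsub]
    · have hne1 : (n:ℕ)-1 ≠ n := by omega
      have hne2 : (n:ℕ)-1 ≠ n+1 := by omega
      have hne3 : (n:ℕ) ≠ n+1 := by omega
      rw [show ({n-1, n, n+1} : Finset ℕ) = insert (n-1) (insert n {n+1}) from rfl,
        Finset.sum_insert (by simp [hne1, hne2]), Finset.sum_insert (by simp [hne3]),
        Finset.sum_singleton]
      have e1 : 2*(((n:ℕ)-1 : ℕ):ℝ) - ((n+n : ℕ):ℝ) = -2 := by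
        have : ((n-1:ℕ):ℝ) = (n:ℝ) - 1 := by
          rw [Nat.cast_sub hn]; norm_num
        rw [this]; push_cast; ring
      have e2 : 2*((n:ℕ):ℝ) - ((n+n : ℕ):ℝ) = 0 := by push_cast; ring
      have e3 : 2*(((n:ℕ)+1 : ℕ):ℝ) - ((n+n : ℕ):ℝ) = 2 := by push_cast; ring
      rw [e1, e2, e3, gfun_zero, gfun_two, gfun_neg_two]
      have hsymm : (n+n).choose (n-1) = (n+n).choose (n+1) := by
        rw [← Nat.choose_symm (by omega : n+1 ≤ n+n)]
        congr 1; omega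
      rw [hsymm]
      have hlt := choose_lt n hn
      have : ((n+n).choose (n+1) : ℝ) + 1 ≤ ((n+n).choose n : ℝ) := by
        exact_mod_cast Nat.succ_le_of_lt hlt
      nlinarith
    · intro j hjr hjn
      simp at hjr hjn
      have : (4:ℝ) ≤ 2*(j:ℝ) - ((n+n:ℕ):ℝ) ∨ 2*(j:ℝ) - ((n+n:ℕ):ℝ) ≤ -4 := by
        rcases Nat.lt_or_ge j n with h | h
        · right
          have : j + 2 ≤ n := by omega
          have : (j:ℝ) + 2 ≤ (n:ℝ) := by exact_mod_cast this
          push_cast; linarith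
        · left
          have : n + 2 ≤ j := by omega
          have : (n:ℝ) + 2 ≤ (j:ℝ) := by exact_mod_cast this
          push_cast; linarith
      rcases this with h | h
      · rw [gfun_of_ge _ h, mul_zero]
      · rw [gfun_of_le _ h, mul_zero]

def splitEquiv (m : ℕ) : ((Fin 4 → Bool) × (Fin m → Bool)) ≃ (Fin (4+m) → Bool) where
  toFun p := fun i => Sum.elim p.1 p.2 (finSumFinEquiv.symm i)
  invFun x := (fun a => x (Fin.castAdd m a), fun b => x (Fin.natAdd 4 b))
  left_inv p := by
    ext i <;> simp
  right_inv x := by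
    funext i
    have h : finSumFinEquiv (finSumFinEquiv.symm i) = i := Equiv.apply_symm_apply _ _
    rcases hs : finSumFinEquiv.symm i with a | b <;> rw [hs] at h <;> simp [← h]

lemma split_sum (m : ℕ) (H : (Fin (4+m) → Bool) → ℝ) :
    ∑ x : Fin (4+m) → Bool, H x
      = ∑ y : Fin 4 → Bool, ∑ z : Fin m → Bool,
          H (fun i => Sum.elim y z (finSumFinEquiv.symm i)) := by
  have := Fintype.sum_equiv (splitEquiv m)
    (fun p => H (fun i => Sum.elim p.1 p.2 (finSumFinEquiv.symm i))) H
    (fun p => rfl)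
  rw [← this, Fintype.sum_prod_type]

lemma sum_eps_split (m : ℕ) (y : Fin 4 → Bool) (z : Fin m → Bool) :
    ∑ i : Fin (4+m), eps (Sum.elim y z (finSumFinEquiv.symm i))
      = (∑ i, eps (y i)) + ∑ i, eps (z i) := by
  rw [← Fintype.sum_equiv finSumFinEquiv
    (fun s => eps (Sum.elim y z s))
    (fun i => eps (Sum.elim y z (finSumFinEquiv.symm i)))
    (fun s => by simp)]
  rw [Fintype.sum_sum_type]
  simp

lemma prod_eps_split (m : ℕ) (y : Fin 4 → Bool) (z : Fin m → Bool) :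
    ∏ i ∈ (Finset.univ : Finset (Fin 4)).map (Fin.castAddEmb m),
        eps (Sum.elim y z (finSumFinEquiv.symm i))
      = ∏ i, eps (y i) := by
  rw [Finset.prod_map]
  refine Finset.prod_congr rfl fun i _ => ?_
  have : (Fin.castAddEmb m) i = Fin.castAdd m i := rfl
  rw [this, finSumFinEquiv_symm_apply_castAdd]
  simp

lemma eps_eq (b : Bool) : (if b then (1:ℝ) else -1) = eps b := rfl

/-- For even `k ≥ 4`, the function `ℓ_k(x) = |(x₁ + ⋯ + x_k)/√k|` has Fourier weight at
levels `≥ 4` at least `2^{−2k}/k`; in particular it is nonzero. -/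
theorem levelFour_weight_majority (k : ℕ) (hk4 : 4 ≤ k) (hke : Even k) :
    (2 : ℝ) ^ (-(2 * (k : ℤ))) / k ≤
      (∑ S ∈ Finset.univ.filter (fun S : Finset (Fin k) => 4 ≤ S.card),
        (fourierCoef k
          (fun x => |(∑ i, (if x i then (1 : ℝ) else -1)) / Real.sqrt k|) S) ^ 2) ∧
    (∑ S ∈ Finset.univ.filter (fun S : Finset (Fin k) => 4 ≤ S.card),
        (fourierCoef k
          (fun x => |(∑ i, (if x i then (1 : ℝ) else -1)) / Real.sqrt k|) S) ^ 2) ≠ 0 := by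
  obtain ⟨m, rfl⟩ : ∃ m, k = 4 + m := ⟨k - 4, by omega⟩
  obtain ⟨n, rfl⟩ : ∃ n, m = n + n := by
    rcases hke with ⟨r, hr⟩; exact ⟨r - 2, by omega⟩
  have hS₀card : ((Finset.univ : Finset (Fin 4)).map (Fin.castAddEmb (n+n))).card = 4 := by
    simp
  have hS₀mem : (Finset.univ : Finset (Fin 4)).map (Fin.castAddEmb (n+n)) ∈
      Finset.univ.filter (fun S : Finset (Fin (4+(n+n))) => 4 ≤ S.card) := by
    simp [hS₀card]
  set U : ℝ := ∑ z : Fin (n+n) → Bool, gfun (∑ i, eps (z i)) with hU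
  have hUle : U ≤ -8 := U_le n
  have hNpos : (0:ℝ) < ((4+(n+n) : ℕ):ℝ) := by positivity
  -- the coefficient at S₀
  have hT : ∑ x : Fin (4+(n+n)) → Bool,
      |(∑ i, eps (x i)) / Real.sqrt ((4+(n+n) : ℕ):ℝ)|
          * ∏ i ∈ (Finset.univ : Finset (Fin 4)).map (Fin.castAddEmb (n+n)), eps (x i)
        = U / Real.sqrt ((4+(n+n) : ℕ):ℝ) := by
    have habs : ∀ x : Fin (4+(n+n)) → Bool,
        |(∑ i, eps (x i)) / Real.sqrt ((4+(n+n) : ℕ):ℝ)|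
          = |∑ i, eps (x i)| / Real.sqrt ((4+(n+n) : ℕ):ℝ) := fun x => by
      rw [abs_div, abs_of_nonneg (Real.sqrt_nonneg _)]
    simp only [habs, div_mul_eq_mul_div]
    rw [← Finset.sum_div]
    congr 1
    rw [split_sum (n+n) (fun x => |∑ i, eps (x i)|
      * ∏ i ∈ (Finset.univ : Finset (Fin 4)).map (Fin.castAddEmb (n+n)), eps (x i))]
    rw [Finset.sum_comm, hU]
    refine Finset.sum_congr rfl fun z _ => ?_
    simp only [gfun]
    rw [← sum4 (∑ i, eps (z i))]
    refine Finset.sum_congr rfl fun y _ => ?_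
    rw [sum_eps_split, prod_eps_split]
    ring
  have hcoef : fourierCoef (4+(n+n))
      (fun x => |(∑ i, (if x i then (1 : ℝ) else -1)) / Real.sqrt ((4+(n+n) : ℕ):ℝ)|)
      ((Finset.univ : Finset (Fin 4)).map (Fin.castAddEmb (n+n)))
        = U / Real.sqrt ((4+(n+n) : ℕ):ℝ) / 2 ^ (4+(n+n)) := by
    simp only [fourierCoef, eps_eq]
    rw [hT]
  have h2N : (0:ℝ) < (2:ℝ)^(4+(n+n)) := by positivity
  have hsq : (fourierCoef (4+(n+n))
      (fun x => |(∑ i, (if x i then (1 : ℝ) else -1)) / Real.sqrt ((4+(n+n) : ℕ):ℝ)|)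
      ((Finset.univ : Finset (Fin 4)).map (Fin.castAddEmb (n+n))))^2
        = U^2 / (((4+(n+n) : ℕ):ℝ) * ((2:ℝ)^(4+(n+n)))^2) := by
    rw [hcoef, div_pow, div_pow, Real.sq_sqrt hNpos.le, div_div]
  have hkey : (2 : ℝ) ^ (-(2 * ((4+(n+n) : ℕ) : ℤ))) / ((4+(n+n) : ℕ):ℝ)
      ≤ U^2 / (((4+(n+n) : ℕ):ℝ) * ((2:ℝ)^(4+(n+n)))^2) := by
    have hz : (2 : ℝ) ^ (-(2 * ((4+(n+n) : ℕ) : ℤ))) / ((4+(n+n) : ℕ):ℝ)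
        = 1 / (((4+(n+n) : ℕ):ℝ) * ((2:ℝ)^(4+(n+n)))^2) := by
      rw [zpow_neg, show (2*((4+(n+n):ℕ):ℤ)) = ((2*(4+(n+n)) : ℕ) : ℤ) by push_cast; ring,
        zpow_natCast, two_mul, pow_add]
      field_simp
    rw [hz]
    gcongr
    nlinarith
  have hsumle := Finset.single_le_sum
    (f := fun S => (fourierCoef (4+(n+n))
      (fun x => |(∑ i, (if x i then (1 : ℝ) else -1)) / Real.sqrt ((4+(n+n) : ℕ):ℝ)|) S)^2)
    (fun S _ => sq_nonneg _) hS₀mem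
  have hmain : (2 : ℝ) ^ (-(2 * ((4+(n+n) : ℕ) : ℤ))) / ((4+(n+n) : ℕ):ℝ) ≤
      ∑ S ∈ Finset.univ.filter (fun S : Finset (Fin (4+(n+n))) => 4 ≤ S.card),
        (fourierCoef (4+(n+n))
          (fun x => |(∑ i, (if x i then (1 : ℝ) else -1)) / Real.sqrt ((4+(n+n) : ℕ):ℝ)|) S)^2 := by
    rw [← hsq] at hkey
    exact le_trans hkey hsumle
  constructor
  · exact hmain
  · have hpos : (0:ℝ) < (2 : ℝ) ^ (-(2 * ((4+(n+n) : ℕ) : ℤ))) / ((4+(n+n) : ℕ):ℝ) := by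
      positivity
    exact (lt_of_lt_of_le hpos hmain).ne'
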